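/- Let p = (e₀,e₁) ∈ W with X_Q(ξ,η) = (η, −‖η‖²ξ), and let π denote orthogonal projection ℝ^{2n+2} → T_pW. Then for j ≥ 2: π(D_{U_j} X_Q) = −V_j and π(D_{V_j} X_Q) = U_j, where D denotes the directional derivative in ℝ^{2n+2} of the extension X_Q(ξ,η)=(η,−‖η‖²ξ), computed along curves in W through p; and for j = 1: π(D_{U_1} X_Q) = −V₁ and π(D_{V_1} X_Q) = (3/2)U₁. -/

import Mathlib

/-! The normal space of `W` at `p` is spanned by `(e₀, 0)` and `(e₁, e₀)` (the gradients of the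
defining functions `‖ξ‖²` and `⟨ξ, η⟩`), so `pr v = t` as soon as `t ∈ T_pW` and `v - t` is a
combination of these two vectors. Each of the four identities reduces to exhibiting that combination:
for `U₁` it is `-(e₀, 0)`, for `V₁` it is `-½ (e₁, e₀)`, and for `j ≥ 2` the vector `D X_Q`
already lies in `T_pW`. -/

noncomputable section
open scoped RealInnerProductSpace

/-- `ℝ^{n+1}` as a Euclidean space. -/
abbrev EV (n : ℕ) := EuclideanSpace ℝ (Fin (n + 1))

/-- standard basis vector `eᵢ`. -/
def ev (n : ℕ) (i : Fin (n + 1)) : EV n := EuclideanSpace.single i 1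

/-- Tangent space of `W = {‖ξ‖=1, ⟨ξ,η⟩=0}` at `p = (e₀,e₁)`. -/
def TpW (n : ℕ) : Set (EV n × EV n) := {w | w.1 0 = 0 ∧ w.2 0 + w.1 1 = 0}

/-- The Euclidean inner product on `ℝ^{2n+2}`. -/
def pairInner {n : ℕ} (v w : EV n × EV n) : ℝ := ⟪v.1, w.1⟫ + ⟪v.2, w.2⟫

/-- Euclidean directional derivative at `p = (e₀,e₁)` of the extension
`X_Q(ξ,η) = (η, −‖η‖²ξ)` in the direction `w`:
`D_w X_Q = (w_η, −2⟨e₁,w_η⟩ e₀ − w_ξ)`. -/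
def DX (n : ℕ) (w : EV n × EV n) : EV n × EV n :=
  (w.2, -((2 * w.2 1) • ev n 0) - w.1)

section ev

variable {n : ℕ}

lemma ev_apply_self (i : Fin (n + 1)) : ev n i i = 1 := by
  simp [ev]

lemma ev_apply_of_ne {i j : Fin (n + 1)} (h : j ≠ i) : ev n i j = 0 := by
  simp [ev, h]

end ev

namespace TpW

variable {n : ℕ}

lemma sub_mem {a b : EV n × EV n} (ha : a ∈ TpW n) (hb : b ∈ TpW n) : a - b ∈ TpW n := by
  obtain ⟨ha₁, ha₂⟩ := ha
  obtain ⟨hb₁, hb₂⟩ := hb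
  refine ⟨?_, ?_⟩ <;> simp only [Prod.fst_sub, Prod.snd_sub, PiLp.sub_apply] <;> linarith

lemma smul_mem (c : ℝ) {a : EV n × EV n} (ha : a ∈ TpW n) : c • a ∈ TpW n := by
  obtain ⟨ha₁, ha₂⟩ := ha
  refine ⟨?_, ?_⟩ <;> simp only [Prod.smul_fst, Prod.smul_snd, PiLp.smul_apply, smul_eq_mul]
  · rw [ha₁, mul_zero]
  · rw [← mul_add, ha₂, mul_zero]

end TpW

section pairInner

variable {n : ℕ}

lemma pairInner_sub_left (a b c : EV n × EV n) :
    pairInner (a - b) c = pairInner a c - pairInner b c := by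
  simp only [pairInner, Prod.fst_sub, Prod.snd_sub, inner_sub_left]
  ring

lemma eq_zero_of_pairInner_self_eq_zero {d : EV n × EV n} (h : pairInner d d = 0) : d = 0 := by
  have h₁ := real_inner_self_nonneg (x := d.1)
  have h₂ := real_inner_self_nonneg (x := d.2)
  unfold pairInner at h
  exact Prod.ext ((inner_self_eq_zero (𝕜 := ℝ)).mp (by linarith))
    ((inner_self_eq_zero (𝕜 := ℝ)).mp (by linarith))

lemma pairInner_normal_eq_zero (a b : ℝ) {w : EV n × EV n} (hw : w ∈ TpW n) :
    pairInner (a • (ev n 0, (0 : EV n)) + b • (ev n 1, ev n 0)) w = 0 := by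
  obtain ⟨hw₁, hw₂⟩ := hw
  simp only [pairInner, ev, Prod.fst_add, Prod.snd_add, Prod.smul_fst, Prod.smul_snd,
    inner_add_left, real_inner_smul_left, EuclideanSpace.inner_single_left, map_one, one_mul,
    smul_zero, inner_zero_left, hw₁]
  linear_combination b * hw₂

end pairInner

section projection

variable {n : ℕ} (pr : (EV n × EV n) →ₗ[ℝ] EV n × EV n) (hmem : ∀ v, pr v ∈ TpW n)
  (horth : ∀ v, ∀ w ∈ TpW n, pairInner (v - pr v) w = 0)
include hmem horth

lemma pr_eq_of_sub_orthogonal {v t : EV n × EV n} (ht : t ∈ TpW n)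
    (hv : ∀ w ∈ TpW n, pairInner (v - t) w = 0) : pr v = t := by
  have hd : pr v - t ∈ TpW n := TpW.sub_mem (hmem v) ht
  have hdd : pairInner (pr v - t) (pr v - t) = 0 := by
    have : pr v - t = (v - t) - (v - pr v) := by abel
    rw [this, pairInner_sub_left, ← this, hv _ hd, horth v _ hd, sub_zero]
  exact sub_eq_zero.mp (eq_zero_of_pairInner_self_eq_zero hdd)

lemma pr_eq_of_sub_eq_normal {v t : EV n × EV n} (ht : t ∈ TpW n) (a b : ℝ)
    (hv : v - t = a • (ev n 0, (0 : EV n)) + b • (ev n 1, ev n 0)) : pr v = t :=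
  pr_eq_of_sub_orthogonal pr hmem horth ht fun _ hw => hv ▸ pairInner_normal_eq_zero a b hw

end projection

/-- with `pr` the orthogonal projection onto `T_pW` at `p = (e₀,e₁)`,
one has `pr(D_{U₁}X_Q) = −V₁`, `pr(D_{V₁}X_Q) = (3/2)U₁`, and for `j ≥ 2`:
`pr(D_{Uⱼ}X_Q) = −Vⱼ`, `pr(D_{Vⱼ}X_Q) = Uⱼ`. -/
theorem stmt9 (n : ℕ) (hn : 1 ≤ n)
    (pr : (EV n × EV n) →ₗ[ℝ] EV n × EV n)
    (hmem : ∀ v, pr v ∈ TpW n)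
    (horth : ∀ v, ∀ w ∈ TpW n, pairInner (v - pr v) w = 0) :
    -- U₁ = (e₁, −e₀), V₁ = (0, e₁)
    pr (DX n (ev n 1, -(ev n 0))) = ((0 : EV n), -(ev n 1)) ∧
    pr (DX n ((0 : EV n), ev n 1)) = ((3 / 2 : ℝ) • ((ev n 1, -(ev n 0)) : EV n × EV n)) ∧
    (∀ k : Fin n, (k : ℕ) ≠ 0 →
      -- Uⱼ = (eⱼ, 0), Vⱼ = (0, eⱼ) with j = k+1 ≥ 2
      pr (DX n (ev n k.succ, (0 : EV n))) = ((0 : EV n), -(ev n k.succ)) ∧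
      pr (DX n ((0 : EV n), ev n k.succ)) = ((ev n k.succ, (0 : EV n)) : EV n × EV n)) := by
  have : NeZero n := ⟨by omega⟩
  have h01 : (0 : Fin (n + 1)) ≠ 1 := Fin.zero_ne_one'
  have hU₁ : ((ev n 1, -(ev n 0)) : EV n × EV n) ∈ TpW n :=
    ⟨ev_apply_of_ne h01, by simp [ev_apply_self]⟩
  refine ⟨pr_eq_of_sub_eq_normal pr hmem horth ⟨rfl, by simp [ev_apply_of_ne h01]⟩ (-1) 0 ?_,
    pr_eq_of_sub_eq_normal pr hmem horth (TpW.smul_mem _ hU₁) 0 (-1 / 2) ?_, fun k hk => ?_⟩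
  · ext i <;> simp [DX, ev_apply_of_ne h01.symm]
  · ext i <;> simp [DX, ev_apply_self] <;> ring
  have hk0 : k.succ ≠ 0 := Fin.succ_ne_zero k
  have hk1 : k.succ ≠ 1 := by
    rw [Ne, Fin.ext_iff, Fin.val_succ, Fin.val_one', Nat.mod_eq_of_lt (by omega)]
    omega
  refine ⟨pr_eq_of_sub_eq_normal pr hmem horth ⟨rfl, by simp [ev_apply_of_ne hk0.symm]⟩ 0 0 ?_,
    pr_eq_of_sub_eq_normal pr hmem horth
      ⟨ev_apply_of_ne hk0.symm, by simp [ev_apply_of_ne hk1.symm]⟩ 0 0 ?_⟩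
  · simp [DX]
  · simp [DX, ev_apply_of_ne hk1.symm]
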